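/- Let R be a commutative ring, N ≥ 1, and let σ, t and s_1,…,s_N be invertible elements of R. Define: u^{(k)} to be the family (σ t^{k−i})_{i=1,…,k}; v to be the family (s_i + s_i^{−1})_{i=1,…,N}; w^{(m)} to be the family (σ t^{N−i} + σ^{−1} t^{i−N})_{i=m,…,N}; d^{(k)}_j := σ^j t^{jk − j(j+1)/2} · ê_j(u^{(k)}); d_m := σ^m t^{mN − m(m+1)/2} · ê_m(s_1,…,s_N); and f_m := σ^m t^{mN − m(m+1)/2} · Σ_{j=0}^{m} (−1)^j e_{m−j}(v) h_j(w^{(m)}) for m ≥ 1, with f_0 := 1. Then for every 1 ≤ m ≤ N: d_m = Σ_{j=0}^{m} d^{(N−m+j)}_j · f_{m−j}. (This is the identity between the eigenvalues of the Koornwinder–Macdonald operators and those of van Diejen's operators, with s_i = σ t^{N−i} q^{λ_i}.) -/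

import Mathlib

open scoped BigOperators

noncomputable section

/-- The elementary symmetric polynomial `e_k` of the family `(u_i)_{i ∈ s}`. -/
def esym {R : Type*} [CommRing R] (k : ℕ) (s : Finset ℕ) (u : ℕ → R) : R :=
  ∑ S ∈ Finset.powersetCard k s, ∏ i ∈ S, u i

/-- The complete homogeneous symmetric polynomial `h_k` of the family `(u_i)_{i ∈ s}`. -/
def hsym {R : Type*} [CommRing R] (k : ℕ) (s : Finset ℕ) (u : ℕ → R) : R :=
  ∑ m ∈ s.sym k, ((m : Multiset ℕ).map u).prod

/-- The BC-type elementary symmetric function `ê_k` of a family of invertible elements: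
`ê_k = ∑_{S, T ⊆ s, |S| + |T| = k} (∏_{i∈S} z_i)(∏_{i∈T} z_i⁻¹)`. -/
def ehat {R : Type*} [CommRing R] (k : ℕ) (s : Finset ℕ) (z : ℕ → Rˣ) : R :=
  ∑ p ∈ (s.powerset ×ˢ s.powerset).filter (fun p => p.1.card + p.2.card = k),
    (∏ i ∈ p.1, (z i : R)) * ∏ i ∈ p.2, (((z i)⁻¹ : Rˣ) : R)

/-- `d^{(k)}_j = σ^j t^{jk - j(j+1)/2} ê_j(u^{(k)})` where `u^{(k)} = (σ t^{k-i})_{1≤i≤k}`. -/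
def dEigen0 {R : Type*} [CommRing R] (σ t : Rˣ) (k j : ℕ) : R :=
  ((σ ^ j * t ^ ((j : ℤ) * (k : ℤ) - ((j : ℤ) * ((j : ℤ) + 1)) / 2) : Rˣ) : R) *
    ehat j (Finset.Icc 1 k) (fun i => σ * t ^ ((k : ℤ) - (i : ℤ)))

/-- `d_m = σ^m t^{mN - m(m+1)/2} ê_m(s_1,…,s_N)`. -/
def dEigen {R : Type*} [CommRing R] (N : ℕ) (σ t : Rˣ) (s : ℕ → Rˣ) (m : ℕ) : R :=
  ((σ ^ m * t ^ ((m : ℤ) * (N : ℤ) - ((m : ℤ) * ((m : ℤ) + 1)) / 2) : Rˣ) : R) *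
    ehat m (Finset.Icc 1 N) s

/-- `f_m = σ^m t^{mN - m(m+1)/2} ∑_{j=0}^m (-1)^j e_{m-j}(v) h_j(w^{(m)})` for `m ≥ 1`,
with `f_0 = 1`, where `v = (s_i + s_i⁻¹)_{1≤i≤N}` and
`w^{(m)} = (σ t^{N-i} + σ⁻¹ t^{i-N})_{m≤i≤N}`. -/
def fEigen {R : Type*} [CommRing R] (N : ℕ) (σ t : Rˣ) (s : ℕ → Rˣ) (m : ℕ) : R :=
  if m = 0 then 1
  else
    ((σ ^ m * t ^ ((m : ℤ) * (N : ℤ) - ((m : ℤ) * ((m : ℤ) + 1)) / 2) : Rˣ) : R) *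
      ∑ j ∈ Finset.range (m + 1),
        (-1 : R) ^ j *
          esym (m - j) (Finset.Icc 1 N) (fun i => (s i : R) + (((s i)⁻¹ : Rˣ) : R)) *
          hsym j (Finset.Icc m N)
            (fun i => ((σ * t ^ ((N : ℤ) - (i : ℤ)) : Rˣ) : R) +
              ((σ⁻¹ * t ^ ((i : ℤ) - (N : ℤ)) : Rˣ) : R))


/-!
Since `(1 + zX)(1 + z⁻¹X) = (1 + X²) + (z + z⁻¹)X`, `ê_k(z)` is the `X^k`-coefficient of
`∏ᵢ ((1 + X²) + (zᵢ + zᵢ⁻¹)X)`. With `Z = 1 + X²`, `Y = X`, the identity thus follows from the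
homogeneous expansion
`∏_{i ≤ N} (Z + vᵢY) = ∑_r e_r(V - W_{≥r}) Y^r ∏_{r < i ≤ N} (Z + wᵢY)`,
valid for arbitrary `v, w, Y, Z`: dehomogenized, it writes `∏ᵢ (1 + vᵢY)` in the basis
`Y^r ∏_{i > r} (1 + wᵢY)`, and it is proved by descending induction on the first index, the
sum telescoping thanks to `h_{c+1}(W_{≥q}) = h_{c+1}(W_{>q}) + w_q h_c(W_{≥q})`. For
`w_i = σt^{N-i} + σ⁻¹t^{i-N}` the `X^{m-r}`-coefficient of `∏_{i > r}` is `ê_{m-r}(u^{(N-r)})`,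
and the prefactors multiply because `m(m+1)/2 = (m-r)(m-r+1)/2 + r(r+1)/2 + r(m-r)`.
-/

open Finset Polynomial

section

variable {R : Type*} [CommRing R]

lemma esym_zero (s : Finset ℕ) (u : ℕ → R) : esym 0 s u = 1 := by
  simp [esym]

lemma hsym_zero (s : Finset ℕ) (u : ℕ → R) : hsym 0 s u = 1 := by
  simp [hsym]; rfl

lemma map_esym {S : Type*} [CommRing S] (f : R →+* S) (k : ℕ) (s : Finset ℕ) (u : ℕ → R) :
    f (esym k s u) = esym k s (fun i => f (u i)) := by
  simp [esym, map_sum, map_prod]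

lemma map_hsym {S : Type*} [CommRing S] (f : R →+* S) (k : ℕ) (s : Finset ℕ) (u : ℕ → R) :
    f (hsym k s u) = hsym k s (fun i => f (u i)) := by
  simp [hsym, map_sum, ← Multiset.prod_hom']

lemma hsym_succ_insert {a : ℕ} {s : Finset ℕ} (ha : a ∉ s) (c : ℕ) (u : ℕ → R) :
    hsym (c + 1) (insert a s) u = hsym (c + 1) s u + u a * hsym c (insert a s) u := by
  classical
  rw [hsym, ← sum_filter_not_add_sum_filter _ (fun m => a ∈ m)]
  congr 1
  · refine sum_congr (ext fun m => ?_) fun _ _ => rfl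
    simp only [mem_filter, mem_sym_iff, mem_insert]
    exact ⟨fun ⟨hm, ham⟩ b hb => (hm b hb).resolve_left (by rintro rfl; exact ham hb),
      fun hm => ⟨fun b hb => .inr (hm b hb), fun ham => ha (hm a ham)⟩⟩
  · rw [hsym, mul_sum]
    refine sum_bij' (fun m hm => m.erase a (mem_filter.1 hm).2) (fun m _ => Sym.cons a m)
      ?_ ?_ (fun m _ => Sym.cons_erase _) (fun m _ => Sym.erase_cons_head _ _) ?_
    · intro m hm
      simp only [mem_filter, mem_sym_iff] at hm ⊢
      intro b hb
      rw [← Sym.mem_coe, Sym.coe_erase] at hb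
      exact hm.1 b (Multiset.mem_of_mem_erase hb)
    · intro m hm
      simp only [mem_filter, mem_sym_iff, Sym.mem_cons] at hm ⊢
      exact ⟨fun b hb => hb.elim (fun h => h ▸ mem_insert_self _ _) (hm b), .inl trivial⟩
    · intro m hm
      conv_lhs => rw [← Sym.cons_erase (mem_filter.1 hm).2]
      rw [Sym.coe_cons, Multiset.map_cons, Multiset.prod_cons]

lemma hsym_succ_Icc {q N : ℕ} (h : q ≤ N) (c : ℕ) (u : ℕ → R) :
    hsym (c + 1) (Icc q N) u = hsym (c + 1) (Icc (q + 1) N) u + u q * hsym c (Icc q N) u := by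
  rw [← insert_Icc_add_one_left_eq_Icc h, hsym_succ_insert (by simp)]

lemma prod_add_mul_eq_sum_esym (s : Finset ℕ) (u : ℕ → R) (Y Z : R) :
    ∏ i ∈ s, (Z + u i * Y) = ∑ k ∈ range (#s + 1), esym k s u * Y ^ k * Z ^ (#s - k) := by
  classical
  simp_rw [add_comm Z, prod_add, sum_powerset, esym, sum_mul]
  refine sum_congr rfl fun k _ => sum_congr rfl fun t ht => ?_
  rw [mem_powersetCard] at ht
  rw [prod_mul_distrib, prod_const, prod_const, card_sdiff_of_subset ht.1, ht.2]

/-- The `r`-th coefficient of the power series `(∑ₖ aₖ Yᵏ) / ∏_{q ≤ i ≤ N} (1 + wᵢ Y)`; for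
`aₖ = e_k(v)` it is `e_r(V - W_{≥q})`, the elementary symmetric function of the difference
of the alphabets `v` and `(w_i)_{q ≤ i ≤ N}`. -/
def quotCoeff (a w : ℕ → R) (q N r : ℕ) : R :=
  ∑ c ∈ range (r + 1), (-1) ^ c * a (r - c) * hsym c (Icc q N) w

section quotCoeff

variable {a w : ℕ → R} {q N : ℕ}

lemma quotCoeff_zero : quotCoeff a w q N 0 = a 0 := by
  simp [quotCoeff, hsym_zero]

lemma quotCoeff_of_lt (h : N < q) (r : ℕ) : quotCoeff a w q N r = a r := by
  rw [quotCoeff, sum_range_succ', Icc_eq_empty (by omega), hsym_zero]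
  simp [hsym]

lemma quotCoeff_succ (h : q ≤ N) (r : ℕ) :
    quotCoeff a w q N (r + 1) = quotCoeff a w (q + 1) N (r + 1) - w q * quotCoeff a w q N r := by
  simp only [quotCoeff]
  rw [sum_range_succ' _ (r + 1), sum_range_succ' _ (r + 1), mul_sum]
  simp only [hsym_succ_Icc h, hsym_zero, Nat.add_sub_add_right]
  rw [← sub_add_eq_add_sub, ← sum_sub_distrib]
  congr 1
  refine sum_congr rfl fun c _ => ?_
  ring

end quotCoeff

lemma map_quotCoeff (a w : ℕ → R) (q N : ℕ) {S : Type*} [CommRing S] (f : R →+* S) (r : ℕ) :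
    f (quotCoeff a w q N r) = quotCoeff (fun j => f (a j)) (fun i => f (w i)) q N r := by
  simp [quotCoeff, map_sum, map_hsym]

theorem sum_quotCoeff_mul_prod_Icc (a w : ℕ → R) (Y Z : R) {q N : ℕ} (hq : q ≤ N) :
    ∑ r ∈ range (N - q + 1),
        quotCoeff a w (q + r) N r * Y ^ r * ∏ i ∈ Icc (q + r + 1) N, (Z + w i * Y) =
      ∑ j ∈ range (N - q + 1), a j * Y ^ j * Z ^ (N - q - j) := by
  induction hq using Nat.decreasingInduction with
  | self => simp [quotCoeff_zero]
  | of_succ q hq ih =>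
    obtain ⟨d, hd⟩ : ∃ d, N - q = d + 1 := ⟨N - (q + 1), by omega⟩
    rw [show N - (q + 1) = d by omega] at ih
    set P : ℕ → R := fun p => ∏ i ∈ Icc (p + 1) N, (Z + w i * Y)
    set U : ℕ → R := fun r => quotCoeff a w (q + r + 1) N r * Y ^ r * P (q + r)
    have telescope : ∀ r ∈ range (d + 1),
        quotCoeff a w (q + (r + 1)) N (r + 1) * Y ^ (r + 1) * P (q + (r + 1)) =
          Z * (quotCoeff a w (q + 1 + r) N r * Y ^ r * P (q + 1 + r)) + (U (r + 1) - U r) := by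
      intro r hr
      have hr : q + r + 1 ≤ N := by rw [mem_range] at hr; omega
      simp only [U, P, ← add_assoc, add_right_comm q 1 r]
      rw [quotCoeff_succ hr, ← mul_prod_Ioc_eq_prod_Icc hr, ← Icc_add_one_left_eq_Ioc]
      ring
    rw [hd, sum_range_succ', sum_congr rfl telescope, sum_add_distrib, ← mul_sum, ih,
      sum_range_sub, sum_range_succ _ (d + 1)]
    have hU : U (d + 1) = a (d + 1) * Y ^ (d + 1) := by
      simp [U, P, quotCoeff_of_lt (show N < q + (d + 1) + 1 by omega),
        Icc_eq_empty_of_lt (show N < q + (d + 1) + 1 by omega)]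
    have hZ : ∀ j ∈ range (d + 1),
        Z * (a j * Y ^ j * Z ^ (d - j)) = a j * Y ^ j * Z ^ (d + 1 - j) := by
      intro j hj
      rw [show d + 1 - j = d - j + 1 by rw [mem_range] at hj; omega, pow_succ]
      ring
    simp only [hU, U, P, quotCoeff_zero, mul_sum, sum_congr rfl hZ, Nat.sub_self]
    ring

lemma prod_one_add_C_mul_X (s : Finset ℕ) (u : ℕ → R) :
    ∏ i ∈ s, (1 + C (u i) * X) = ∑ S ∈ s.powerset, C (∏ i ∈ S, u i) * X ^ #S := by
  simp [prod_one_add, prod_mul_distrib, map_prod]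

lemma ehat_eq_coeff (k : ℕ) (s : Finset ℕ) (z : ℕ → Rˣ) :
    ehat k s z = (∏ i ∈ s, ((1 + X ^ 2) + C ((z i : R) + ((z i)⁻¹ : Rˣ)) * X)).coeff k := by
  have hfactor : ∀ i ∈ s, (1 + X ^ 2) + C ((z i : R) + ((z i)⁻¹ : Rˣ)) * X =
      (1 + C (z i : R) * X) * (1 + C (((z i)⁻¹ : Rˣ) : R) * X) := by
    intro i _
    have h : C (z i : R) * C (((z i)⁻¹ : Rˣ) : R) = 1 := by rw [← map_mul, Units.mul_inv, map_one]
    rw [map_add]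
    linear_combination (-X ^ 2 : R[X]) * h
  rw [prod_congr rfl hfactor, prod_mul_distrib, prod_one_add_C_mul_X, prod_one_add_C_mul_X,
    sum_mul_sum, ← sum_product', finsetSum_coeff, ehat, sum_filter]
  refine sum_congr rfl fun p _ => ?_
  rw [mul_mul_mul_comm, ← map_mul, ← pow_add, coeff_C_mul_X_pow]
  simp only [eq_comm]

lemma coeff_sum_C_mul_X_pow_mul (g : ℕ → R) (Q : ℕ → R[X]) {m n : ℕ} (hmn : m ≤ n) :
    (∑ r ∈ range (n + 1), C (g r) * X ^ r * Q r).coeff m =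
      ∑ r ∈ range (m + 1), g r * (Q r).coeff (m - r) := by
  simp_rw [finsetSum_coeff, mul_assoc, coeff_C_mul, coeff_X_pow_mul', mul_ite, mul_zero]
  rw [← sum_filter]
  congr 1
  ext r
  simp only [mem_filter, mem_range]
  omega

theorem ehat_Icc_eq_sum_quotCoeff_mul_ehat (s z : ℕ → Rˣ) {m N : ℕ} (hm : m ≤ N) :
    ehat m (Icc 1 N) s =
      ∑ r ∈ range (m + 1),
        quotCoeff (fun j => esym j (Icc 1 N) (fun i => (s i : R) + ((s i)⁻¹ : Rˣ)))
          (fun i => (z i : R) + ((z i)⁻¹ : Rˣ)) r N r * ehat (m - r) (Icc (r + 1) N) z := by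
  set a : ℕ → R := fun j => esym j (Icc 1 N) (fun i => (s i : R) + ((s i)⁻¹ : Rˣ))
  set w : ℕ → R := fun i => (z i : R) + ((z i)⁻¹ : Rˣ)
  have hexpand := sum_quotCoeff_mul_prod_Icc (fun j => C (a j)) (fun i => C (w i)) X (1 + X ^ 2)
    (Nat.zero_le N)
  simp only [Nat.sub_zero, zero_add, ← map_quotCoeff] at hexpand
  rw [ehat_eq_coeff, prod_add_mul_eq_sum_esym, Nat.card_Icc, Nat.add_sub_cancel]
  simp only [← map_esym]
  rw [← hexpand, coeff_sum_C_mul_X_pow_mul _ _ hm]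
  simp only [ehat_eq_coeff, w]

def eigenScale (σ t : Rˣ) (j k : ℕ) : Rˣ :=
  σ ^ j * t ^ ((j : ℤ) * (k : ℤ) - ((j : ℤ) * ((j : ℤ) + 1)) / 2)

lemma eigenScale_mul (σ t : Rˣ) {r m N : ℕ} (hrm : r ≤ m) (hmN : m ≤ N) :
    eigenScale σ t (m - r) (N - r) * eigenScale σ t r N = eigenScale σ t m N := by
  rw [eigenScale, eigenScale, eigenScale, mul_mul_mul_comm, ← pow_add, ← zpow_add,
    Nat.sub_add_cancel hrm]
  congr 2
  push_cast [hrm, hrm.trans hmN]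
  obtain ⟨a, ha⟩ := Int.even_mul_succ_self ((m : ℤ) - r)
  obtain ⟨b, hb⟩ := Int.even_mul_succ_self (r : ℤ)
  have hsq : (m : ℤ) * (m + 1) = (m - r) * (m - r + 1) + r * (r + 1) + 2 * (r * (m - r)) := by
    ring
  have hprod : ((m : ℤ) - r) * (N - r) + r * N = m * N - r * (m - r) := by ring
  omega

lemma dEigen0_sub_eq (σ t : Rˣ) {r N : ℕ} (hr : r ≤ N) (j : ℕ) :
    dEigen0 σ t (N - r) j =
      eigenScale σ t j (N - r) * ehat j (Icc (r + 1) N) (fun i => σ * t ^ ((N : ℤ) - i)) := by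
  rw [dEigen0, ehat_eq_coeff, ehat_eq_coeff, ← Nat.sub_add_cancel hr, add_comm r 1,
    ← map_add_right_Icc, prod_map, Nat.sub_add_cancel hr]
  congr 1
  refine congrArg (coeff · j) (prod_congr rfl fun i _ => ?_)
  simp only [addRightEmbedding_apply]
  push_cast [hr]
  ring_nf

lemma fEigen_eq_eigenScale_mul_quotCoeff (N : ℕ) (σ t : Rˣ) (s : ℕ → Rˣ) (r : ℕ) :
    fEigen N σ t s r = eigenScale σ t r N *
      quotCoeff (fun j => esym j (Icc 1 N) (fun i => (s i : R) + ((s i)⁻¹ : Rˣ)))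
        (fun i => ((σ * t ^ ((N : ℤ) - i) : Rˣ) : R) + ((σ * t ^ ((N : ℤ) - i))⁻¹ : Rˣ)) r N r := by
  rcases Nat.eq_zero_or_pos r with rfl | hr
  · simp [fEigen, eigenScale, quotCoeff_zero, esym_zero]
  · simp only [fEigen, if_neg hr.ne', quotCoeff, mul_inv, ← zpow_neg, neg_sub]
    rfl

end

theorem eigenvalue_identity_general {R : Type*} [CommRing R] (N : ℕ)
    (σ t : Rˣ) (s : ℕ → Rˣ) (m : ℕ) (hmN : m ≤ N) :
    dEigen N σ t s m =
      ∑ j ∈ Finset.range (m + 1), dEigen0 σ t (N - m + j) j * fEigen N σ t s (m - j) := by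
  show (eigenScale σ t m N : R) * _ = _
  rw [ehat_Icc_eq_sum_quotCoeff_mul_ehat s (fun i => σ * t ^ ((N : ℤ) - i)) hmN, mul_sum]
  conv_rhs => rw [← sum_range_reflect]
  refine sum_congr rfl fun r hr => ?_
  have hrm : r ≤ m := Nat.lt_succ_iff.mp (mem_range.mp hr)
  rw [show m + 1 - 1 - r = m - r by omega, show N - m + (m - r) = N - r by omega,
    Nat.sub_sub_self hrm, dEigen0_sub_eq σ t (hrm.trans hmN), fEigen_eq_eigenScale_mul_quotCoeff,
    ← eigenScale_mul σ t hrm hmN, Units.val_mul]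
  ring

/-- The identity between the eigenvalues of the Koornwinder–Macdonald operators and those
of van Diejen's operators: for every `1 ≤ m ≤ N`,
`d_m = ∑_{j=0}^m d^{(N-m+j)}_j · f_{m-j}`. -/
theorem eigenvalue_identity {R : Type*} [CommRing R] (N : ℕ) (hN : 1 ≤ N)
    (σ t : Rˣ) (s : ℕ → Rˣ) (m : ℕ) (hm1 : 1 ≤ m) (hmN : m ≤ N) :
    dEigen N σ t s m =
      ∑ j ∈ Finset.range (m + 1), dEigen0 σ t (N - m + j) j * fEigen N σ t s (m - j) :=
  eigenvalue_identity_general N σ t s m hmN
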